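/- Let X be a finite set of variables, ≼ a monomial order on the monomials of Z2[X], F ⊆ Z2[X], and let G be a reduced Gröbner basis of the ideal ⟨F⟩ with respect to ≼. Then S_F = ↑(HT(G)), the upward closure with respect to ◁ of the set of head monomials of elements of G. -/
import Mathlib


open MvPolynomial

/-- Monomials in the variables `σ`, represented by their exponent vectors. -/
abbrev Mon (σ : Type*) := σ →₀ ℕ

/-- A monomial order: a total order on monomials such that `1 ≼ t` for every monomial `t`
and `t ≼ u → t·v ≼ u·v` (written additively on exponent vectors). -/
structure MonOrd (σ : Type*) where
  le : Mon σ → Mon σ → Prop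
  le_refl : ∀ t, le t t
  le_trans : ∀ t u v, le t u → le u v → le t v
  le_antisymm : ∀ t u, le t u → le u t → t = u
  le_total : ∀ t u, le t u ∨ le u t
  zero_le : ∀ t, le 0 t
  add_le_add : ∀ t u v, le t u → le (t + v) (u + v)

/-- Strict version of a monomial order. -/
def MonOrd.lt {σ : Type*} (μ : MonOrd σ) (t u : Mon σ) : Prop := μ.le t u ∧ t ≠ u

/-- The extension of a monomial order (given by the relation `r` on monomials) to polynomials:
`g ≼ f` iff `g = f` or the greatest monomial on which `f` and `g` differ occurs in `f`.
(This is the closed form of the recursive definition: `g ≼ f` iff `g = f`, or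
`HT g ≺ HT f`, or `HT g = HT f` and `g - HT g ≼ f - HT f`, with `0` the least polynomial.) -/
def polyLe {σ : Type*} (r : Mon σ → Mon σ → Prop) (g f : MvPolynomial σ (ZMod 2)) : Prop :=
  g = f ∨ ∃ t, t ∈ f.support ∧ t ∉ g.support ∧
    ∀ u : Mon σ, ((u ∈ f.support ∧ u ∉ g.support) ∨ (u ∈ g.support ∧ u ∉ f.support)) → r u t

/-- Strict extension of a monomial order to polynomials. -/
def polyLt {σ : Type*} (r : Mon σ → Mon σ → Prop) (g f : MvPolynomial σ (ZMod 2)) : Prop :=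
  polyLe r g f ∧ g ≠ f

/-- `S_F`: the set of non-residual polynomials with respect to `F` and the monomial order `r`,
i.e. those `f` admitting a `g` with `f + g ∈ ⟨F⟩` and `g ≺ f`. -/
def SF {σ : Type*} (r : Mon σ → Mon σ → Prop) (F : Set (MvPolynomial σ (ZMod 2))) :
    Set (MvPolynomial σ (ZMod 2)) :=
  {f | ∃ g, f + g ∈ Ideal.span F ∧ polyLt r g f}

/-- `t` is the head monomial (`r`-greatest monomial) of the polynomial `f`. -/
def IsHT {σ : Type*} (r : Mon σ → Mon σ → Prop) (f : MvPolynomial σ (ZMod 2)) (t : Mon σ) :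
    Prop :=
  t ∈ f.support ∧ ∀ u ∈ f.support, r u t

/-- `HT(S)`: the set of head monomials (as polynomials) of the nonzero elements of `S`. -/
def HTset {σ : Type*} (r : Mon σ → Mon σ → Prop) (S : Set (MvPolynomial σ (ZMod 2))) :
    Set (MvPolynomial σ (ZMod 2)) :=
  {p | ∃ f ∈ S, f ≠ 0 ∧ ∃ t, IsHT r f t ∧ p = monomial t 1}

/-- The divisibility (componentwise) order `◁` on monomials. -/
def triMon {σ : Type*} (t u : Mon σ) : Prop := ∀ x, t x ≤ u x

/-- The order `◁` on polynomials: `p ◁ q` iff there is an injective map `φ` from the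
monomials of `p` to the monomials of `q` with `t ◁ φ t` for each monomial `t` of `p`. -/
def triPoly {σ : Type*} (p q : MvPolynomial σ (ZMod 2)) : Prop :=
  ∃ φ : Mon σ → Mon σ, Set.InjOn φ ↑p.support ∧ ∀ t ∈ p.support, φ t ∈ q.support ∧ triMon t (φ t)

/-- Upward closure with respect to `◁`. -/
def upClo {σ : Type*} (A : Set (MvPolynomial σ (ZMod 2))) : Set (MvPolynomial σ (ZMod 2)) :=
  {q | ∃ p ∈ A, triPoly p q}

/-- `Min_◁(A)`: the `◁`-minimal elements of `A`. -/
def minTri {σ : Type*} (A : Set (MvPolynomial σ (ZMod 2))) : Set (MvPolynomial σ (ZMod 2)) :=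
  {p | p ∈ A ∧ ∀ q ∈ A, triPoly q p → q = p}

/-- `G` is a Gröbner basis of the ideal `I` with respect to the monomial order `r`. -/
def IsGB {σ : Type*} (r : Mon σ → Mon σ → Prop) (G : Finset (MvPolynomial σ (ZMod 2)))
    (I : Ideal (MvPolynomial σ (ZMod 2))) : Prop :=
  (↑G : Set (MvPolynomial σ (ZMod 2))) ⊆ ↑I ∧
    Ideal.span (↑G : Set (MvPolynomial σ (ZMod 2))) = I ∧
    Ideal.span (HTset r (↑I : Set (MvPolynomial σ (ZMod 2)))) = Ideal.span (HTset r ↑G)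

/-- `G` is a reduced Gröbner basis of `I` with respect to `r`. -/
def IsReducedGB {σ : Type*} (r : Mon σ → Mon σ → Prop) (G : Finset (MvPolynomial σ (ZMod 2)))
    (I : Ideal (MvPolynomial σ (ZMod 2))) : Prop :=
  IsGB r G I ∧ ∀ f ∈ G, ¬ ∀ t ∈ f.support,
    (monomial t 1 : MvPolynomial σ (ZMod 2)) ∈
      Ideal.span (HTset r ((↑G : Set (MvPolynomial σ (ZMod 2))) \ {f}))

/-- The variable set `X`: the special variables `s, ℓ, c, c̄, b, b̄` together with, for each
`0 ≤ i ≤ n`, the variables `s_i, f_i, q_{ji}, c_{ji}, b_{ji}` (`1 ≤ j ≤ 4`, encoded by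
`j : Fin 4`) and their barred copies (`bar = true`). -/
inductive MVar (n : ℕ) : Type where
  | vs | vl | vc | vcb | vb | vbb
  | vS (bar : Bool) (i : Fin (n+1))
  | vF (bar : Bool) (i : Fin (n+1))
  | vQ (bar : Bool) (j : Fin 4) (i : Fin (n+1))
  | vC (bar : Bool) (j : Fin 4) (i : Fin (n+1))
  | vB (bar : Bool) (j : Fin 4) (i : Fin (n+1))
deriving DecidableEq

open MVar

abbrev MPoly (n : ℕ) := MvPolynomial (MVar n) (ZMod 2)

/-- `e(n) = 2^(2^n)`. -/
def en (n : ℕ) : ℕ := 2 ^ 2 ^ n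

/-- The set `P_0` (barred copy if `bar = true`). -/
def P0 (n : ℕ) (bar : Bool) : Set (MPoly n) :=
  {p | ∃ j : Fin 4, p =
    X (vB bar j 0) ^ 2 * X (vC bar j 0) * X (vF bar 0) + X (vC bar j 0) * X (vS bar 0)}

/-- The set `P_m` for `m = i+1`, `i : Fin n` (barred copy if `bar = true`).
Here `i.succ` plays the role of `m` and `i.castSucc` the role of `m-1`; the indices
`1,2,3,4` of the paper are encoded as `0,1,2,3 : Fin 4`. -/
def Pm (n : ℕ) (bar : Bool) (i : Fin n) : Set (MPoly n) :=
  ({ X (vQ bar 0 i.succ) * X (vC bar 0 i.castSucc) * X (vS bar i.castSucc) + X (vS bar i.succ),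
    X (vQ bar 1 i.succ) * X (vC bar 1 i.castSucc) * X (vS bar i.castSucc)
      + X (vQ bar 0 i.succ) * X (vB bar 0 i.castSucc) * X (vC bar 0 i.castSucc)
        * X (vF bar i.castSucc),
    X (vQ bar 2 i.succ) * X (vC bar 2 i.castSucc) * X (vF bar i.castSucc)
      + X (vQ bar 1 i.succ) * X (vC bar 1 i.castSucc) * X (vF bar i.castSucc),
    X (vQ bar 2 i.succ) * X (vB bar 0 i.castSucc) * X (vC bar 2 i.castSucc)
        * X (vS bar i.castSucc)
      + X (vQ bar 1 i.succ) * X (vB bar 3 i.castSucc) * X (vC bar 1 i.castSucc)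
        * X (vS bar i.castSucc),
    X (vQ bar 3 i.succ) * X (vB bar 3 i.castSucc) * X (vC bar 3 i.castSucc)
        * X (vF bar i.castSucc)
      + X (vQ bar 2 i.succ) * X (vC bar 2 i.castSucc) * X (vS bar i.castSucc),
    X (vQ bar 3 i.succ) * X (vC bar 3 i.castSucc) * X (vS bar i.castSucc)
      + X (vF bar i.succ) } : Set (MPoly n))
  ∪ {p | ∃ j : Fin 4, p =
      X (vQ bar 1 i.succ) * X (vB bar 2 i.castSucc) * X (vB bar j i.succ) * X (vC bar j i.succ)
          * X (vF bar i.castSucc)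
        + X (vQ bar 1 i.succ) * X (vB bar 1 i.castSucc) * X (vC bar j i.succ)
          * X (vF bar i.castSucc)}

/-- The set `P = P_0 ∪ P_1 ∪ ⋯ ∪ P_n`; for `bar = true` this is the barred copy `P̄`
(the image of `P` under the substitution replacing each variable by its barred version). -/
def PP (n : ℕ) (bar : Bool) : Set (MPoly n) := P0 n bar ∪ ⋃ i : Fin n, Pm n bar i

/-- The set `G` of seven extra binomials. -/
def GG (n : ℕ) : Set (MPoly n) :=
  { X (vB false 3 (Fin.last n)) * X vl * X vb + X vl * X vc,
    X (vB false 3 (Fin.last n)) * X vl * X vbb + X vl * X vcb,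
    X (vC false 3 (Fin.last n)) * X (vF false (Fin.last n)) + X vl,
    X (vC true 3 (Fin.last n)) * X (vF true (Fin.last n))
      + X (vC false 3 (Fin.last n)) * X (vS false (Fin.last n)),
    X (vB true 3 (Fin.last n)) * X (vC false 3 (Fin.last n)) * X (vS false (Fin.last n))
      + X (vC false 3 (Fin.last n)) * X (vS false (Fin.last n)) * X vb,
    X (vB true 3 (Fin.last n)) * X (vC false 3 (Fin.last n)) * X (vS false (Fin.last n))
      + X (vC false 3 (Fin.last n)) * X (vS false (Fin.last n)) * X vbb,
    X (vC true 3 (Fin.last n)) * X (vS true (Fin.last n)) + X vs }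

/-- The set `𝓕 = P ∪ P̄ ∪ G`. -/
def FF (n : ℕ) : Set (MPoly n) := PP n false ∪ PP n true ∪ GG n

/-- The set `C = {ℓ c̄^{m1} c^{m2} : m1 + m2 = e(n)}` of monomials. -/
def Cmon (n : ℕ) : Set (Mon (MVar n)) :=
  {α | ∃ m1 m2 : ℕ, m1 + m2 = en n ∧
    α = Finsupp.single vl 1 + Finsupp.single vcb m1 + Finsupp.single vc m2}

/-- The set `D = {ℓ^j c̄^{m1} c^{m2} : j ∈ {0,1}, j + m1 + m2 ≤ e(n)}` of monomials. -/
def Dmon (n : ℕ) : Set (Mon (MVar n)) :=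
  {α | ∃ j m1 m2 : ℕ, j ≤ 1 ∧ j + m1 + m2 ≤ en n ∧
    α = Finsupp.single vl j + Finsupp.single vcb m1 + Finsupp.single vc m2}

/-- An injective rank function on the variables realizing the variable ordering
(from least to greatest): `s, c, c̄, ℓ, b, b̄`; then `s_0,…,s_n`; `f_0,…,f_n`;
`c_{10},…,c_{1n}; …; c_{40},…,c_{4n}`; `b_{10},…,b_{4n}`; `q_{10},…,q_{4n}`;
then the barred variables in the same pattern. -/
def vrank (n : ℕ) : MVar n → ℕ
  | .vs => 0
  | .vc => 1
  | .vcb => 2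
  | .vl => 3
  | .vb => 4
  | .vbb => 5
  | .vS bar i => 6 + (cond bar (14 * (n+1)) 0) + (i : ℕ)
  | .vF bar i => 6 + (cond bar (14 * (n+1)) 0) + (n+1) + (i : ℕ)
  | .vC bar j i => 6 + (cond bar (14 * (n+1)) 0) + 2*(n+1) + (j : ℕ)*(n+1) + (i : ℕ)
  | .vB bar j i => 6 + (cond bar (14 * (n+1)) 0) + 6*(n+1) + (j : ℕ)*(n+1) + (i : ℕ)
  | .vQ bar j i => 6 + (cond bar (14 * (n+1)) 0) + 10*(n+1) + (j : ℕ)*(n+1) + (i : ℕ)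

/-- The lexicographic monomial order on `X`: `t ≼_lex u` iff `t = u` or the exponents differ
somewhere and at the greatest variable (w.r.t. `vrank`) where they differ, the exponent of
`t` is smaller. -/
def lexLe (n : ℕ) (t u : Mon (MVar n)) : Prop :=
  t = u ∨ ∃ x : MVar n, t x < u x ∧ ∀ y : MVar n, vrank n x < vrank n y → t y = u y

/-- The total degree of a monomial. -/
def mdeg {σ : Type*} (t : Mon σ) : ℕ := t.sum fun _ k => k

/-- The degree lexicographic monomial order. -/
def degLexLe (n : ℕ) (t u : Mon (MVar n)) : Prop :=
  mdeg t < mdeg u ∨ (mdeg t = mdeg u ∧ lexLe n t u)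

/-- Weighted degree of a monomial with respect to a weight map `w`. -/
noncomputable def wdeg {n : ℕ} (w : MVar n → ℝ) (t : Mon (MVar n)) : ℝ :=
  t.sum fun x k => (k : ℝ) * w x

/-- The weighted monomial order determined by the weight map `w`. -/
def wLe {n : ℕ} (w : MVar n → ℝ) (t u : Mon (MVar n)) : Prop := t = u ∨ wdeg w t < wdeg w u



lemma zmod2_add_ne_zero_iff (a b : ZMod 2) : a + b ≠ 0 ↔ a ≠ b := by revert a b; decide

lemma zmod2_ne_iff (a b : ZMod 2) : a ≠ b ↔ ((a ≠ 0 ∧ b = 0) ∨ (b ≠ 0 ∧ a = 0)) := by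
  revert a b; decide

lemma mem_support_add_char2 {σ : Type*} (f h : MvPolynomial σ (ZMod 2)) (u : Mon σ) :
    u ∈ (f + h).support ↔ f.coeff u ≠ h.coeff u := by
  rw [mem_support_iff, coeff_add, zmod2_add_ne_zero_iff]

lemma mem_support_monomial_mul {σ : Type*} (v : Mon σ) (p : MvPolynomial σ (ZMod 2)) (s : Mon σ) :
    s ∈ (monomial v (1:ZMod 2) * p).support ↔ ∃ w ∈ p.support, s = v + w := by
  rw [mem_support_iff, coeff_monomial_mul']
  split_ifs with hv
  · rw [one_mul]
    constructor
    · intro hc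
      exact ⟨s - v, mem_support_iff.mpr hc, (add_tsub_cancel_of_le hv).symm⟩
    · rintro ⟨w, hw, rfl⟩
      rwa [add_tsub_cancel_left, ← mem_support_iff]
  · constructor
    · intro hc; exact absurd rfl hc
    · rintro ⟨w, hw, rfl⟩; exact absurd le_self_add hv
lemma stmt2_aux {σ : Type*} (μ : MonOrd σ) (F : Set (MvPolynomial σ (ZMod 2)))
    (G : Finset (MvPolynomial σ (ZMod 2)))
    (hG : IsReducedGB μ.le G (Ideal.span F)) :
    SF μ.le F = upClo (HTset μ.le (↑G : Set (MvPolynomial σ (ZMod 2)))) := by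
  obtain ⟨⟨hGsub, hGspan, hHT⟩, -⟩ := hG
  have himg : HTset μ.le (↑G : Set (MvPolynomial σ (ZMod 2))) =
      (fun s => monomial s (1:ZMod 2)) ''
        {t | ∃ p ∈ (↑G : Set (MvPolynomial σ (ZMod 2))), p ≠ 0 ∧ IsHT μ.le p t} := by
    ext q; constructor
    · rintro ⟨p, hp, hp0, t, ht, rfl⟩; exact ⟨t, ⟨p, hp, hp0, ht⟩, rfl⟩
    · rintro ⟨t, ⟨p, hp, hp0, ht⟩, rfl⟩; exact ⟨p, hp, hp0, t, ht, rfl⟩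
  ext f
  constructor
  · rintro ⟨g, hfg, hle, hne⟩
    rcases hle with rfl | ⟨t, htf, htg, hdom⟩
    · exact absurd rfl hne
    -- h := f + g has head term t
    have hsupp : ∀ u, u ∈ (f + g).support ↔ f.coeff u ≠ g.coeff u :=
      fun u => mem_support_add_char2 f g u
    have hth : t ∈ (f + g).support := by
      rw [hsupp, zmod2_ne_iff]
      exact Or.inl ⟨mem_support_iff.mp htf, not_not.mp (fun h => htg (mem_support_iff.mpr h))⟩
    have hHTh : IsHT μ.le (f + g) t := by
      refine ⟨hth, fun u hu => ?_⟩
      rw [hsupp, zmod2_ne_iff] at hu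
      refine hdom u ?_
      rcases hu with ⟨h1, h2⟩ | ⟨h1, h2⟩
      · exact Or.inl ⟨mem_support_iff.mpr h1, fun hc => (mem_support_iff.mp hc) h2⟩
      · exact Or.inr ⟨mem_support_iff.mpr h1, fun hc => (mem_support_iff.mp hc) h2⟩
    have hne0 : f + g ≠ 0 := fun h0 => by simp [h0] at hth
    have hmem : (monomial t (1:ZMod 2)) ∈
        Ideal.span (HTset μ.le (↑G : Set (MvPolynomial σ (ZMod 2)))) := by
      rw [← hHT]
      exact Ideal.subset_span ⟨f + g, hfg, hne0, t, hHTh, rfl⟩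
    rw [himg, mem_ideal_span_monomial_image] at hmem
    obtain ⟨tg, htgmem, htgle⟩ := hmem t (by simp [support_monomial])
    obtain ⟨p, hpG, hp0, hpHT⟩ := htgmem
    refine ⟨monomial tg 1, ⟨p, hpG, hp0, tg, hpHT, rfl⟩, fun _ => t, ?_, ?_⟩
    · intro a ha b hb _
      simp only [support_monomial, if_neg one_ne_zero, Finset.coe_singleton,
        Set.mem_singleton_iff] at ha hb
      rw [ha, hb]
    · intro s hs
      simp only [support_monomial, if_neg one_ne_zero, Finset.mem_singleton] at hs
      subst hs
      exact ⟨htf, fun x => htgle x⟩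
  · rintro ⟨q, ⟨p, hpG, hp0, tg, ⟨htgsupp, htgmax⟩, rfl⟩, φ, hinj, hφ⟩
    have htg1 : tg ∈ (monomial tg (1:ZMod 2)).support := by
      simp [support_monomial]
    obtain ⟨huf, htri⟩ := hφ tg htg1
    set u := φ tg with hu
    set v : Mon σ := u - tg with hv
    have huv : tg + v = u := by
      ext x
      simp only [hv, Finsupp.coe_add, Finsupp.coe_tsub, Pi.add_apply, Pi.sub_apply]
      exact Nat.add_sub_cancel' (htri x)
    set h := monomial v (1:ZMod 2) * p with hh
    have hhI : h ∈ Ideal.span F := by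
      have : p ∈ Ideal.span F := by
        rw [← hGspan]; exact Ideal.subset_span hpG
      exact Ideal.mul_mem_left _ _ this
    have huh : u ∈ h.support := by
      rw [hh, mem_support_monomial_mul]
      exact ⟨tg, htgsupp, by rw [← huv, add_comm]⟩
    have hone : ∀ a : ZMod 2, a ≠ 0 → a = 1 := by decide
    have hfu : f.coeff u = 1 := hone _ (mem_support_iff.mp huf)
    have hhu : h.coeff u = 1 := hone _ (mem_support_iff.mp huh)
    have hfhu : (f + h).coeff u = 0 := by
      rw [coeff_add, hfu, hhu]; decide
    refine ⟨f + h, ?_, ?_, ?_⟩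
    · -- f + (f + h) = h in char 2
      have h2 : f + (f + h) = h := by
        rw [← add_assoc, ← two_smul (ZMod 2) f, show (2 : ZMod 2) = 0 from rfl,
          zero_smul, zero_add]
      rw [h2]; exact hhI
    · -- polyLe: witness u
      refine Or.inr ⟨u, huf, ?_, ?_⟩
      · rw [mem_support_iff]
        intro hc; exact hc hfhu
      · intro u' hu'
        have hu'h : u' ∈ h.support := by
          rw [mem_support_iff]
          intro hc
          have heq : f.coeff u' = (f + h).coeff u' := by rw [coeff_add, hc, add_zero]
          rcases hu' with ⟨h1, h2⟩ | ⟨h1, h2⟩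
          · exact h2 (mem_support_iff.mpr (heq ▸ mem_support_iff.mp h1))
          · exact h2 (mem_support_iff.mpr (heq.symm ▸ mem_support_iff.mp h1))
        rw [hh, mem_support_monomial_mul] at hu'h
        obtain ⟨w, hw, rfl⟩ := hu'h
        have := μ.add_le_add w tg v (htgmax w hw)
        rw [huv] at this
        rwa [add_comm]
    · -- f + h ≠ f
      intro hc
      rw [hc] at hfhu
      rw [hfu] at hfhu
      exact one_ne_zero hfhu
/-- If `G` is a reduced Gröbner basis of `⟨F⟩` w.r.t. `≼`, then
`S_F = ↑(HT(G))`, the `◁`-upward closure of the set of head monomials of `G`. -/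
theorem stmt2 {σ : Type*} [Finite σ] (μ : MonOrd σ) (F : Set (MvPolynomial σ (ZMod 2)))
    (G : Finset (MvPolynomial σ (ZMod 2)))
    (hG : IsReducedGB μ.le G (Ideal.span F)) :
    SF μ.le F = upClo (HTset μ.le (↑G : Set (MvPolynomial σ (ZMod 2)))) := by
  exact stmt2_aux μ F G hG
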